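/- arXiv:math/0508402 — 2 statements merged into one kernel-verified Lean document; each statement's English description precedes it below -/
import Mathlib

section
/- Let M be a measure space with measure μ, and let J₁,…,Jₙ : M → ℝ be integrable functions such that for some constant C and every unit vector (v₁,…,vₙ) ∈ ℝⁿ, ∫_M (v₁J₁+⋯+vₙJₙ)^{2m} dμ = C. Then ∫_M (J₁²+⋯+Jₙ²)^m dμ = (Γ(1/2)Γ(m+n/2))/(Γ(m+1/2)Γ(n/2)) · C. -/
open MeasureTheory Real Finset

/-- decrement at i -/
def dec {n : ℕ} (s : Fin n → ℕ) (i : Fin n) : Fin n → ℕ := Function.update s i (s i - 1)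
/-- increment at i -/
def inc {n : ℕ} (s : Fin n → ℕ) (i : Fin n) : Fin n → ℕ := Function.update s i (s i + 1)

lemma gdup (k : ℕ) :
    Real.Gamma ((k : ℝ) + 1/2) * (4 ^ k * (k).factorial) = ((2*k).factorial : ℝ) * Real.Gamma (1/2) := by
  induction k with
  | zero => simp
  | succ k ih =>
    have h : ((k : ℝ) + 1/2) ≠ 0 := by positivity
    have : ((k+1 : ℕ) : ℝ) + 1/2 = ((k : ℝ) + 1/2) + 1 := by push_cast; ring
    rw [this, Real.Gamma_add_one h]
    have e2 : (2*(k+1)) = (2*k+1)+1 := by ring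
    rw [e2]
    push_cast [Nat.factorial_succ]
    linear_combination ((k:ℝ)+1/2)*4*((k:ℝ)+1)*ih

lemma inc_dec {n : ℕ} (s : Fin n → ℕ) (i : Fin n) (hi : s i ≠ 0) : inc (dec s i) i = s := by
  funext j
  by_cases hj : j = i
  · subst hj; simp [inc, dec]; omega
  · simp [inc, dec, Function.update_of_ne hj]

lemma dec_inc {n : ℕ} (t : Fin n → ℕ) (i : Fin n) : dec (inc t i) i = t := by
  funext j
  by_cases hj : j = i
  · subst hj; simp [inc, dec]
  · simp [inc, dec, Function.update_of_ne hj]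



lemma erase_congr_dec {n : ℕ} (s : Fin n → ℕ) (i : Fin n) :
    ∑ j ∈ univ.erase i, dec s i j = ∑ j ∈ univ.erase i, s j :=
  Finset.sum_congr rfl fun j hj => by
    simp [dec, Function.update_of_ne (Finset.mem_erase.mp hj).1]

lemma erase_congr_inc {n : ℕ} (s : Fin n → ℕ) (i : Fin n) :
    ∑ j ∈ univ.erase i, inc s i j = ∑ j ∈ univ.erase i, s j :=
  Finset.sum_congr rfl fun j hj => by
    simp [inc, Function.update_of_ne (Finset.mem_erase.mp hj).1]

lemma dec_sum {n : ℕ} (s : Fin n → ℕ) (i : Fin n) (hi : s i ≠ 0) (m : ℕ)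
    (hs : ∑ j, s j = m + 1) : ∑ j, dec s i j = m := by
  have e1 := Finset.add_sum_erase univ s (mem_univ i)
  have e2 := Finset.add_sum_erase univ (dec s i) (mem_univ i)
  rw [erase_congr_dec] at e2
  have h4 : dec s i i = s i - 1 := by simp [dec]
  omega

lemma inc_sum {n : ℕ} (s : Fin n → ℕ) (i : Fin n) (m : ℕ)
    (hs : ∑ j, s j = m) : ∑ j, inc s i j = m + 1 := by
  have e1 := Finset.add_sum_erase univ s (mem_univ i)
  have e2 := Finset.add_sum_erase univ (inc s i) (mem_univ i)
  rw [erase_congr_inc] at e2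
  have h4 : inc s i i = s i + 1 := by simp [inc]
  omega

lemma prod_fact_dec {n : ℕ} (s : Fin n → ℕ) (i : Fin n) (hi : s i ≠ 0) :
    (∏ j, (s j).factorial) = s i * ∏ j, ((dec s i) j).factorial := by
  rw [← Finset.mul_prod_erase univ (fun j => (s j).factorial) (mem_univ i),
      ← Finset.mul_prod_erase univ (fun j => ((dec s i) j).factorial) (mem_univ i)]
  have h3 : ∀ j ∈ univ.erase i, ((dec s i) j).factorial = (s j).factorial := by
    intro j hj
    simp [dec, Function.update_of_ne (Finset.mem_erase.mp hj).1]
  rw [Finset.prod_congr rfl h3]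
  have h4 : dec s i i = s i - 1 := by simp [dec]
  rw [h4, ← mul_assoc, Nat.mul_factorial_pred hi]

lemma pascal {n : ℕ} (m : ℕ) (s : Fin n → ℕ) (hs : ∑ i, s i = m + 1) :
    (Nat.multinomial univ s : ℝ) =
      ∑ i, (if s i = 0 then 0 else (Nat.multinomial univ (dec s i) : ℝ)) := by
  have hF : (↑(∏ j, (s j).factorial) : ℝ) ≠ 0 := by positivity
  apply mul_left_cancel₀ hF
  have spec1 : ((∏ j, (s j).factorial : ℕ) : ℝ) * (Nat.multinomial univ s : ℝ)
      = ((m+1).factorial : ℝ) := by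
    exact_mod_cast congrArg (Nat.cast : ℕ → ℝ) (by rw [Nat.multinomial_spec, hs])
  rw [Finset.mul_sum]
  have key : ∀ i : Fin n,
      (↑(∏ j, (s j).factorial) : ℝ) *
        (if s i = 0 then 0 else (Nat.multinomial univ (dec s i) : ℝ))
      = (s i : ℝ) * (m).factorial := by
    intro i
    by_cases hi : s i = 0
    · simp [hi]
    · rw [if_neg hi]
      have spec2 : (∏ j, ((dec s i) j).factorial)
          * Nat.multinomial univ (dec s i) = m.factorial := by
        rw [Nat.multinomial_spec, dec_sum s i hi m hs]
      rw [prod_fact_dec s i hi]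
      push_cast [← spec2]
      ring
  rw [Finset.sum_congr rfl (fun i _ => key i), ← Finset.sum_mul, ← Nat.cast_sum, hs, spec1]
  push_cast [Nat.factorial_succ]
  ring
lemma sumrec {n : ℕ} (m : ℕ) (g : (Fin n → ℕ) → ℝ) :
    ∑ s ∈ piAntidiag (univ : Finset (Fin n)) (m+1), (Nat.multinomial univ s : ℝ) * g s
    = ∑ i : Fin n, ∑ t ∈ piAntidiag (univ : Finset (Fin n)) m,
        (Nat.multinomial univ t : ℝ) * g (inc t i) := by
  have step1 : ∀ s ∈ piAntidiag (univ : Finset (Fin n)) (m+1),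
      (Nat.multinomial univ s : ℝ) * g s
      = ∑ i : Fin n, (if s i ≠ 0 then (Nat.multinomial univ (dec s i) : ℝ) * g s else 0) := by
    intro s hs
    have hsum : ∑ i, s i = m + 1 := ((mem_piAntidiag).mp hs).1
    rw [pascal m s hsum, Finset.sum_mul]
    exact Finset.sum_congr rfl fun i _ => by split_ifs <;> simp_all
  rw [Finset.sum_congr rfl step1, Finset.sum_comm]
  refine Finset.sum_congr rfl fun i _ => ?_
  rw [← Finset.sum_filter]
  refine Finset.sum_nbij' (fun s => dec s i) (fun t => inc t i) ?_ ?_ ?_ ?_ ?_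
  · intro s hs
    rw [Finset.mem_filter, mem_piAntidiag] at hs
    rw [mem_piAntidiag]
    exact ⟨dec_sum s i hs.2 m hs.1.1, fun j _ => mem_univ j⟩
  · intro t ht
    rw [mem_piAntidiag] at ht
    rw [Finset.mem_filter, mem_piAntidiag]
    refine ⟨⟨inc_sum t i m ht.1, fun j _ => mem_univ j⟩, ?_⟩
    simp [inc]
  · intro s hs
    exact inc_dec s i (Finset.mem_filter.mp hs).2
  · intro t _
    exact dec_inc t i
  · intro s hs
    rw [inc_dec s i (Finset.mem_filter.mp hs).2]
lemma mult_univ_zero {n : ℕ} : Nat.multinomial (univ : Finset (Fin n)) 0 = 1 := by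
  have := Nat.multinomial_spec (univ : Finset (Fin n)) 0
  simpa using this

lemma prod_gamma_inc {n : ℕ} (t : Fin n → ℕ) (i : Fin n) :
    ∏ j, Real.Gamma ((inc t i j : ℝ) + 1/2)
      = ((t i : ℝ) + 1/2) * ∏ j, Real.Gamma ((t j : ℝ) + 1/2) := by
  rw [← Finset.mul_prod_erase univ (fun j => Real.Gamma ((inc t i j : ℝ) + 1/2)) (mem_univ i),
      ← Finset.mul_prod_erase univ (fun j => Real.Gamma ((t j : ℝ) + 1/2)) (mem_univ i)]
  have h3 : ∀ j ∈ univ.erase i,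
      Real.Gamma ((inc t i j : ℝ) + 1/2) = Real.Gamma ((t j : ℝ) + 1/2) := by
    intro j hj
    simp [inc, Function.update_of_ne (Finset.mem_erase.mp hj).1]
  rw [Finset.prod_congr rfl h3]
  have h4 : (inc t i i : ℝ) = (t i : ℝ) + 1 := by simp [inc]
  have h5 : ((t i : ℝ) + 1) + 1/2 = ((t i : ℝ) + 1/2) + 1 := by ring
  have h6 : ((t i : ℝ) + 1/2) ≠ 0 := by positivity
  rw [h4, h5, Real.Gamma_add_one h6, mul_assoc]

lemma Rrec {n : ℕ} (m : ℕ) :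
    ∑ s ∈ piAntidiag (univ : Finset (Fin n)) (m+1),
        (Nat.multinomial univ s : ℝ) * ∏ j, Real.Gamma ((s j : ℝ) + 1/2)
    = ((m : ℝ) + n/2) * ∑ t ∈ piAntidiag (univ : Finset (Fin n)) m,
        (Nat.multinomial univ t : ℝ) * ∏ j, Real.Gamma ((t j : ℝ) + 1/2) := by
  rw [sumrec m (fun s => ∏ j, Real.Gamma ((s j : ℝ) + 1/2)), Finset.sum_comm,
    Finset.mul_sum]
  refine Finset.sum_congr rfl fun t ht => ?_
  have hsum : ∑ j, t j = m := ((mem_piAntidiag).mp ht).1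
  have : ∀ i : Fin n, (Nat.multinomial univ t : ℝ) * ∏ j, Real.Gamma ((inc t i j : ℝ) + 1/2)
      = ((t i : ℝ) + 1/2) * ((Nat.multinomial univ t : ℝ) * ∏ j, Real.Gamma ((t j:ℝ) + 1/2)) := by
    intro i; rw [prod_gamma_inc]; ring
  rw [Finset.sum_congr rfl fun i _ => this i, ← Finset.sum_mul]
  have : ∑ i : Fin n, ((t i : ℝ) + 1/2) = (m : ℝ) + n/2 := by
    rw [Finset.sum_add_distrib, ← Nat.cast_sum, hsum]
    simp
    ring
  rw [this]

lemma Rval {n : ℕ} (hn : 1 ≤ n) (m : ℕ) :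
    (∑ s ∈ piAntidiag (univ : Finset (Fin n)) m,
        (Nat.multinomial univ s : ℝ) * ∏ j, Real.Gamma ((s j : ℝ) + 1/2)) * Real.Gamma (n/2)
    = Real.Gamma (1/2) ^ n * Real.Gamma ((m : ℝ) + n/2) := by
  induction m with
  | zero =>
    rw [Finset.piAntidiag_zero, Finset.sum_singleton, mult_univ_zero]
    simp
  | succ m ih =>
    rw [Rrec, mul_assoc, ih]
    have h1 : (0:ℝ) < (m : ℝ) + n/2 := by
      have : (1:ℝ) ≤ (n:ℝ) := by exact_mod_cast hn
      positivity
    have h2 : ((m+1 : ℕ) : ℝ) + (n:ℝ)/2 = ((m : ℝ) + n/2) + 1 := by push_cast; ring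
    rw [h2, Real.Gamma_add_one (ne_of_gt h1)]
    ring
lemma coeff_extract {n m : ℕ} (a : (Fin n → ℕ) → ℝ) (C : ℝ)
    (heval : ∀ w : Fin n → ℝ,
      ∑ r ∈ piAntidiag (univ : Finset (Fin n)) (2*m),
        (Nat.multinomial univ r : ℝ) * (∏ i, w i ^ r i) * a r
      = C * (∑ i, w i ^ 2) ^ m) :
    ∀ t ∈ piAntidiag (univ : Finset (Fin n)) m,
      (Nat.multinomial univ (fun i => 2 * t i) : ℝ) * a (fun i => 2 * t i)
        = C * (Nat.multinomial univ t : ℝ) := by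
  classical
  set e : (Fin n → ℕ) ≃ (Fin n →₀ ℕ) := Finsupp.equivFunOnFinite.symm with he
  have eapp : ∀ (r : Fin n → ℕ) (i : Fin n), (e r) i = r i := fun r i => rfl
  set p : MvPolynomial (Fin n) ℝ :=
    ∑ r ∈ piAntidiag (univ : Finset (Fin n)) (2*m),
      MvPolynomial.monomial (e r) ((Nat.multinomial univ r : ℝ) * a r) with hp
  set q : MvPolynomial (Fin n) ℝ :=
    ∑ t ∈ piAntidiag (univ : Finset (Fin n)) m,
      MvPolynomial.monomial (e (fun i => 2 * t i)) (C * (Nat.multinomial univ t : ℝ)) with hq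
  have evmon : ∀ (w : Fin n → ℝ) (r : Fin n → ℕ) (c : ℝ),
      MvPolynomial.eval w (MvPolynomial.monomial (e r) c) = c * ∏ i, w i ^ r i := by
    intro w r c
    rw [MvPolynomial.eval_monomial]
    congr 1
    rw [Finsupp.prod_fintype _ _ (fun i => pow_zero (w i))]
    exact Finset.prod_congr rfl fun i _ => by rw [eapp]
  have hpq : p = q := by
    apply MvPolynomial.funext
    intro w
    rw [hp, hq, map_sum, map_sum]
    calc ∑ r ∈ piAntidiag (univ : Finset (Fin n)) (2*m),
          MvPolynomial.eval w (MvPolynomial.monomial (e r) ((Nat.multinomial univ r : ℝ) * a r))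
        = ∑ r ∈ piAntidiag (univ : Finset (Fin n)) (2*m),
            (Nat.multinomial univ r : ℝ) * (∏ i, w i ^ r i) * a r := by
          refine Finset.sum_congr rfl fun r _ => ?_
          rw [evmon]; ring
      _ = C * (∑ i, w i ^ 2) ^ m := heval w
      _ = ∑ t ∈ piAntidiag (univ : Finset (Fin n)) m,
            MvPolynomial.eval w
              (MvPolynomial.monomial (e fun i => 2 * t i) (C * (Nat.multinomial univ t : ℝ))) := by
          rw [Finset.sum_pow_eq_sum_piAntidiag, Finset.mul_sum]
          refine Finset.sum_congr rfl fun t _ => ?_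
          rw [evmon]
          have : ∀ i : Fin n, (w i ^ 2) ^ t i = w i ^ (2 * t i) := fun i => by
            rw [← pow_mul]
          rw [Finset.prod_congr rfl fun i _ => this i]
          ring
  intro t ht
  have htm : ∑ i, t i = m := (mem_piAntidiag.mp ht).1
  have h2t : (fun i => 2 * t i) ∈ piAntidiag (univ : Finset (Fin n)) (2*m) := by
    rw [mem_piAntidiag]
    exact ⟨by rw [← Finset.mul_sum, htm], fun i _ => mem_univ i⟩
  have hinj : Function.Injective e := e.injective
  have hcp : MvPolynomial.coeff (e fun i => 2 * t i) p
      = (Nat.multinomial univ (fun i => 2 * t i) : ℝ) * a (fun i => 2 * t i) := by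
    rw [hp, MvPolynomial.coeff_sum]
    rw [Finset.sum_eq_single (fun i => 2 * t i)]
    · rw [MvPolynomial.coeff_monomial, if_pos rfl]
    · intro r _ hr
      rw [MvPolynomial.coeff_monomial, if_neg (fun h => hr (hinj h))]
    · intro h; exact absurd h2t h
  have hcq : MvPolynomial.coeff (e fun i => 2 * t i) q = C * (Nat.multinomial univ t : ℝ) := by
    rw [hq, MvPolynomial.coeff_sum]
    rw [Finset.sum_eq_single t]
    · rw [MvPolynomial.coeff_monomial, if_pos rfl]
    · intro t' _ ht'
      rw [MvPolynomial.coeff_monomial, if_neg]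
      intro h
      apply ht'
      have := hinj h
      funext i
      have := congrFun this i
      omega
    · intro h; exact absurd ht h
  rw [← hcp, hpq, hcq]
theorem homogeneous_moments
    {M : Type*} [MeasurableSpace M] (μ : Measure M) (n m : ℕ) (hn : 1 ≤ n)
    (J : Fin n → M → ℝ) (C : ℝ)
    (hint : ∀ r : Fin n → ℕ, (∑ i, r i) = 2 * m →
      Integrable (fun x => ∏ i, (J i x) ^ (r i)) μ)
    (hC : ∀ v : Fin n → ℝ, (∑ i, (v i) ^ 2) = 1 →
      ∫ x, (∑ i, v i * J i x) ^ (2 * m) ∂μ = C) :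
    ∫ x, (∑ i, (J i x) ^ 2) ^ m ∂μ =
      (Real.Gamma (1 / 2) * Real.Gamma (m + n / 2)) /
        (Real.Gamma (m + 1 / 2) * Real.Gamma (n / 2)) * C := by
  classical
  have hg2 : (0:ℝ) < Real.Gamma (1/2) := Real.Gamma_pos_of_pos (by norm_num)
  have hn2 : (0:ℝ) < Real.Gamma ((n:ℝ)/2) := by
    apply Real.Gamma_pos_of_pos
    have : (1:ℝ) ≤ (n:ℝ) := by exact_mod_cast hn
    linarith
  have hm2 : (0:ℝ) < Real.Gamma ((m:ℝ) + 1/2) := Real.Gamma_pos_of_pos (by positivity)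
  -- unit vector for the degenerate case
  have i0 : Fin n := ⟨0, hn⟩
  -- the moments
  set a : (Fin n → ℕ) → ℝ := fun r => ∫ x, ∏ i, (J i x) ^ (r i) ∂μ with ha
  -- expansion of the mixed moment integral
  have INT : ∀ w : Fin n → ℝ,
      ∫ x, (∑ i, w i * J i x) ^ (2*m) ∂μ
      = ∑ r ∈ piAntidiag (univ : Finset (Fin n)) (2*m),
          (Nat.multinomial univ r : ℝ) * (∏ i, w i ^ r i) * a r := by
    intro w
    have hpt : ∀ x : M, (∑ i, w i * J i x) ^ (2*m)
        = ∑ r ∈ piAntidiag (univ : Finset (Fin n)) (2*m),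
            ((Nat.multinomial univ r : ℝ) * ∏ i, w i ^ r i) * ∏ i, J i x ^ r i := by
      intro x
      rw [Finset.sum_pow_eq_sum_piAntidiag]
      refine Finset.sum_congr rfl fun r _ => ?_
      rw [mul_assoc]
      congr 1
      rw [← Finset.prod_mul_distrib]
      exact Finset.prod_congr rfl fun i _ => (mul_pow _ _ _)
    calc ∫ x, (∑ i, w i * J i x) ^ (2*m) ∂μ
        = ∫ x, ∑ r ∈ piAntidiag (univ : Finset (Fin n)) (2*m),
            ((Nat.multinomial univ r : ℝ) * ∏ i, w i ^ r i) * ∏ i, J i x ^ r i ∂μ := by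
          exact integral_congr_ae (Filter.Eventually.of_forall hpt)
      _ = ∑ r ∈ piAntidiag (univ : Finset (Fin n)) (2*m),
            ∫ x, ((Nat.multinomial univ r : ℝ) * ∏ i, w i ^ r i) * ∏ i, J i x ^ r i ∂μ := by
          refine integral_finset_sum _ fun r hr => ?_
          exact (hint r (mem_piAntidiag.mp hr).1).const_mul _
      _ = ∑ r ∈ piAntidiag (univ : Finset (Fin n)) (2*m),
            (Nat.multinomial univ r : ℝ) * (∏ i, w i ^ r i) * a r := by
          refine Finset.sum_congr rfl fun r _ => ?_
          rw [integral_const_mul]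
    -- done
  -- expansion of the target integral
  have INTC : ∫ x, (∑ i, (J i x)^2) ^ m ∂μ
      = ∑ t ∈ piAntidiag (univ : Finset (Fin n)) m,
          (Nat.multinomial univ t : ℝ) * a (fun i => 2 * t i) := by
    have hpt : ∀ x : M, (∑ i, (J i x)^2) ^ m
        = ∑ t ∈ piAntidiag (univ : Finset (Fin n)) m,
            (Nat.multinomial univ t : ℝ) * ∏ i, J i x ^ (2 * t i) := by
      intro x
      rw [Finset.sum_pow_eq_sum_piAntidiag]
      refine Finset.sum_congr rfl fun t _ => ?_
      congr 1
      exact Finset.prod_congr rfl fun i _ => by rw [← pow_mul]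
    calc ∫ x, (∑ i, (J i x)^2) ^ m ∂μ
        = ∫ x, ∑ t ∈ piAntidiag (univ : Finset (Fin n)) m,
            (Nat.multinomial univ t : ℝ) * ∏ i, J i x ^ (2 * t i) ∂μ :=
          integral_congr_ae (Filter.Eventually.of_forall hpt)
      _ = ∑ t ∈ piAntidiag (univ : Finset (Fin n)) m,
            ∫ x, (Nat.multinomial univ t : ℝ) * ∏ i, J i x ^ (2 * t i) ∂μ := by
          refine integral_finset_sum _ fun t ht => ?_
          refine (hint (fun i => 2 * t i) ?_).const_mul _
          rw [← Finset.mul_sum, (mem_piAntidiag.mp ht).1]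
      _ = ∑ t ∈ piAntidiag (univ : Finset (Fin n)) m,
            (Nat.multinomial univ t : ℝ) * a (fun i => 2 * t i) := by
          refine Finset.sum_congr rfl fun t _ => ?_
          rw [integral_const_mul]
  -- the case m = 0
  by_cases hm : m = 0
  · subst hm
    have hv : (∑ i, ((fun i => if i = i0 then (1:ℝ) else 0) i) ^ 2) = 1 := by
      have : ∀ i : Fin n, ((if i = i0 then (1:ℝ) else 0)) ^ 2 = if i = i0 then 1 else 0 := by
        intro i; split_ifs <;> norm_num
      rw [Finset.sum_congr rfl fun i _ => this i, Finset.sum_ite_eq' univ i0 (fun _ => (1:ℝ))]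
      simp
    have h1 := hC _ hv
    simp only [mul_zero, pow_zero, integral_const] at h1 ⊢
    rw [h1]
    have : ((0:ℕ):ℝ) = 0 := by norm_num
    rw [this, zero_add, zero_add]
    field_simp
  -- main case
  have h2m : 2*m ≠ 0 := by omega
  -- the polynomial identity input
  have heval : ∀ w : Fin n → ℝ,
      ∑ r ∈ piAntidiag (univ : Finset (Fin n)) (2*m),
        (Nat.multinomial univ r : ℝ) * (∏ i, w i ^ r i) * a r
      = C * (∑ i, w i ^ 2) ^ m := by
    intro w
    rw [← INT w]
    by_cases hw : (∑ i, w i ^ 2) = 0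
    · have hzero : ∀ i : Fin n, w i = 0 := by
        intro i
        have h := (Finset.sum_eq_zero_iff_of_nonneg (fun i _ => sq_nonneg (w i))).mp hw i
          (mem_univ i)
        exact pow_eq_zero_iff (by norm_num) |>.mp h
      have : ∀ x : M, (∑ i, w i * J i x) ^ (2*m) = 0 := by
        intro x
        rw [Finset.sum_eq_zero fun i _ => by rw [hzero i, zero_mul]]
        exact zero_pow h2m
      rw [integral_congr_ae (Filter.Eventually.of_forall this)]
      rw [hw, zero_pow hm, mul_zero, integral_zero]
    · have hwpos : 0 < ∑ i, w i ^ 2 := by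
        rcases lt_or_eq_of_le (Finset.sum_nonneg fun i _ => sq_nonneg (w i)) with h | h
        · exact h
        · exact absurd h.symm hw
      set t := Real.sqrt (∑ i, w i ^ 2) with hts
      have htpos : 0 < t := Real.sqrt_pos.mpr hwpos
      have ht2 : t^2 = ∑ i, w i ^ 2 := Real.sq_sqrt (le_of_lt hwpos)
      set v : Fin n → ℝ := fun i => w i / t with hv
      have hv1 : (∑ i, (v i) ^ 2) = 1 := by
        rw [hv]
        simp only [div_pow]
        rw [← Finset.sum_div, ht2.symm]
        field_simp
      have hpt : ∀ x : M, (∑ i, w i * J i x) ^ (2*m)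
          = t^(2*m) * (∑ i, v i * J i x) ^ (2*m) := by
        intro x
        have hsum : ∑ i, w i * J i x = t * ∑ i, v i * J i x := by
          rw [Finset.mul_sum]
          refine Finset.sum_congr rfl fun i _ => ?_
          rw [hv]
          field_simp
        rw [hsum, mul_pow]
      rw [integral_congr_ae (Filter.Eventually.of_forall hpt), integral_const_mul,
        hC v hv1, pow_mul, ht2]
      ring
  have hcoeff := coeff_extract a C heval
  -- per-term combinatorial identity
  have CombId : ∀ t ∈ piAntidiag (univ : Finset (Fin n)) m,
      (Nat.multinomial univ t : ℝ) * ((2*m).factorial : ℝ) * Real.Gamma (1/2) ^ n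
      = (Nat.multinomial univ (fun i => 2 * t i) : ℝ)
          * (∏ j, Real.Gamma ((t j : ℝ) + 1/2)) * ((m.factorial : ℝ) * 4 ^ m) := by
    intro t ht
    have htm : ∑ i, t i = m := (mem_piAntidiag.mp ht).1
    have h1 : (∏ j, Real.Gamma ((t j : ℝ) + 1/2)) * 4 ^ m * (∏ j, ((t j).factorial : ℝ))
        = (∏ j, (((2 * t j).factorial : ℕ) : ℝ)) * Real.Gamma (1/2) ^ n := by
      have h0 := Finset.prod_congr rfl fun (j : Fin n) (_ : j ∈ univ) => gdup (t j)
      simp only [Finset.prod_mul_distrib, Finset.prod_const, Finset.prod_pow_eq_pow_sum,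
        htm, Finset.card_univ, Fintype.card_fin] at h0
      linear_combination h0
    have h2 : (∏ j, ((t j).factorial : ℝ)) * (Nat.multinomial univ t : ℝ)
        = (m.factorial : ℝ) := by
      rw [← Nat.cast_prod, ← Nat.cast_mul, Nat.multinomial_spec, htm]
    have h3 : (∏ j, (((2 * t j).factorial : ℕ) : ℝ))
          * (Nat.multinomial univ (fun i => 2 * t i) : ℝ) = (((2*m).factorial : ℕ) : ℝ) := by
      rw [← Nat.cast_prod, ← Nat.cast_mul]
      norm_cast
      rw [Nat.multinomial_spec]
      congr 1
      rw [← Finset.mul_sum, htm]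
    set G := ∏ j, Real.Gamma ((t j : ℝ) + 1/2) with hG
    set F := ∏ j, ((t j).factorial : ℝ) with hF
    set F2 := ∏ j, (((2 * t j).factorial : ℕ) : ℝ) with hF2
    set Mt := (Nat.multinomial univ t : ℝ)
    set M2 := (Nat.multinomial univ (fun i => 2 * t i) : ℝ)
    linear_combination (-(Mt * Real.Gamma (1/2) ^ n)) * h3 + (-(Mt * M2)) * h1
      + (M2 * G * 4^m) * h2
  -- assembly
  set T := ∫ x, (∑ i, (J i x)^2) ^ m ∂μ with hT
  set Rm := ∑ s ∈ piAntidiag (univ : Finset (Fin n)) m,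
      (Nat.multinomial univ s : ℝ) * ∏ j, Real.Gamma ((s j : ℝ) + 1/2) with hRm
  have E1 : T * (((2*m).factorial : ℝ) * Real.Gamma (1/2) ^ n)
      = C * ((m.factorial : ℝ) * 4 ^ m) * Rm := by
    rw [INTC, hRm, Finset.sum_mul, Finset.mul_sum]
    refine Finset.sum_congr rfl fun t ht => ?_
    have hc := hcoeff t ht
    have hcb := CombId t ht
    set G := ∏ j, Real.Gamma ((t j : ℝ) + 1/2)
    set Mt := (Nat.multinomial univ t : ℝ)
    set M2 := (Nat.multinomial univ (fun i => 2 * t i) : ℝ)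
    set A2 := a (fun i => 2 * t i)
    -- Mt * A2 * ((2m)! g^n) = C * (m! 4^m) * (Mt * G)
    linear_combination A2 * hcb + G * ((m.factorial : ℝ) * 4 ^ m) * hc
  have E2 : Rm * Real.Gamma ((n:ℝ)/2)
      = Real.Gamma (1/2) ^ n * Real.Gamma ((m : ℝ) + (n:ℝ)/2) := Rval hn m
  have E3 : Real.Gamma ((m : ℝ) + 1/2) * (4 ^ m * (m).factorial)
      = ((2*m).factorial : ℝ) * Real.Gamma (1/2) := gdup m
  have hfac : (0:ℝ) < ((2*m).factorial : ℝ) := by positivity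
  have hKne : (((2*m).factorial : ℝ) * Real.Gamma (1/2) ^ n) ≠ 0 := by positivity
  have key : T * (Real.Gamma ((m:ℝ) + 1/2) * Real.Gamma ((n:ℝ)/2))
        * (((2*m).factorial : ℝ) * Real.Gamma (1/2) ^ n)
      = (Real.Gamma (1/2) * Real.Gamma ((m:ℝ) + (n:ℝ)/2) * C)
        * (((2*m).factorial : ℝ) * Real.Gamma (1/2) ^ n) := by
    linear_combination (Real.Gamma ((m:ℝ) + 1/2) * Real.Gamma ((n:ℝ)/2)) * E1
      + (C * (m.factorial : ℝ) * 4^m * Real.Gamma ((m:ℝ) + 1/2)) * E2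
      + (C * Real.Gamma (1/2) ^ n * Real.Gamma ((m:ℝ) + (n:ℝ)/2)) * E3
  have key2 : T * (Real.Gamma ((m:ℝ) + 1/2) * Real.Gamma ((n:ℝ)/2))
      = Real.Gamma (1/2) * Real.Gamma ((m:ℝ) + (n:ℝ)/2) * C :=
    mul_right_cancel₀ hKne key
  rw [div_mul_eq_mul_div, eq_div_iff (by positivity : Real.Gamma ((m:ℝ)+1/2) * Real.Gamma ((n:ℝ)/2) ≠ 0)]
  linear_combination key2
end

section
/- Let M be a measure space with J₁,…,Jₙ integrable functions satisfying ∫_M (v₁J₁+⋯+vₙJₙ)^{2m} dμ = C for all unit v ∈ ℝⁿ for every m ≥ 0 (with constants C_m depending on m, all finite), and suppose ∫_M e^{a(J₁²+⋯+Jₙ²)} dμ < ∞ for a given a < 0 with n = 3. Then ∫_M exp(a(J₁²+J₂²+J₃²)) dμ = Σ_{m=0}^∞ (aᵐ/m!)(2m+1) ∫_M J₃^{2m} dμ, provided the series converges absolutely. -/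
open MeasureTheory Finset

namespace PFE

lemma cb_succ (n : ℕ) :
    ((n : ℝ) + 1) * Nat.centralBinom (n + 1) = 2 * (2 * n + 1) * Nat.centralBinom n := by
  have h := congrArg (Nat.cast (R := ℝ)) (Nat.succ_mul_centralBinom_succ n)
  push_cast at h
  linarith

private noncomputable def q (n : ℕ) : ℝ :=
  ∑ a ∈ range (n+1), (Nat.centralBinom a : ℝ) * Nat.centralBinom (n - a)

private noncomputable def r (n : ℕ) : ℝ :=
  ∑ a ∈ range (n+1), (a : ℝ) * Nat.centralBinom a * Nat.centralBinom (n - a)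

private lemma two_r (n : ℕ) : 2 * r n = n * q n := by
  have h : ∑ a ∈ range (n+1),
      (((n - a : ℕ)) : ℝ) * Nat.centralBinom (n - a) * Nat.centralBinom (n - (n - a)) = r n := by
    simpa [r] using Finset.sum_range_reflect
      (fun a => (a : ℝ) * Nat.centralBinom a * Nat.centralBinom (n - a)) (n+1)
  have h2 : ∑ a ∈ range (n+1),
      (((n - a : ℕ)) : ℝ) * Nat.centralBinom (n - a) * Nat.centralBinom (n - (n - a))
      = ∑ a ∈ range (n+1), (((n - a : ℕ)) : ℝ) * Nat.centralBinom a * Nat.centralBinom (n - a) := by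
    refine Finset.sum_congr rfl fun a ha => ?_
    have ha' : a ≤ n := by simpa [Nat.lt_succ_iff] using ha
    rw [Nat.sub_sub_self ha']
    ring
  have key : r n + r n = ∑ a ∈ range (n+1),
      ((a : ℝ) + ((n - a : ℕ) : ℝ)) * (Nat.centralBinom a * Nat.centralBinom (n - a)) := by
    nth_rewrite 1 [← h]
    rw [h2, r, ← Finset.sum_add_distrib]
    exact Finset.sum_congr rfl fun a ha => by ring
  have key2 : ∀ a ∈ range (n+1),
      ((a : ℝ) + ((n - a : ℕ) : ℝ)) * (Nat.centralBinom a * Nat.centralBinom (n - a))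
      = n * ((Nat.centralBinom a : ℝ) * Nat.centralBinom (n - a)) := by
    intro a ha
    have ha' : a ≤ n := by simpa [Nat.lt_succ_iff] using ha
    rw [Nat.cast_sub ha']
    ring
  rw [two_mul, key, Finset.sum_congr rfl key2, ← Finset.mul_sum, q]

private lemma r_succ (k : ℕ) : r (k+1) = 4 * r k + 2 * q k := by
  have h : r (k+1) = ∑ a ∈ range (k+1),
      ((a : ℝ) + 1) * Nat.centralBinom (a + 1) * Nat.centralBinom (k - a) := by
    rw [r, Finset.sum_range_succ']
    simp only [Nat.cast_zero, zero_mul]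
    rw [add_zero]
    refine Finset.sum_congr rfl fun a ha => ?_
    have : k + 1 - (a + 1) = k - a := by omega
    rw [this]
    push_cast
    ring
  rw [h]
  have h2 : ∀ a ∈ range (k+1),
      ((a : ℝ) + 1) * Nat.centralBinom (a + 1) * Nat.centralBinom (k - a)
      = 4 * ((a : ℝ) * Nat.centralBinom a * Nat.centralBinom (k - a))
        + 2 * ((Nat.centralBinom a : ℝ) * Nat.centralBinom (k - a)) := by
    intro a _
    rw [cb_succ a]
    ring
  rw [Finset.sum_congr rfl h2, Finset.sum_add_distrib, ← Finset.mul_sum, ← Finset.mul_sum, r, q]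

private lemma q_eq (k : ℕ) : q k = 4 ^ k := by
  induction k with
  | zero => simp [q, Nat.centralBinom]
  | succ k ih =>
    have h1 : 2 * r (k+1) = (k+1 : ℝ) * q (k+1) := by
      have := two_r (k+1); push_cast at this ⊢; linarith
    have h2 : 2 * r k = (k : ℝ) * q k := two_r k
    have h3 := r_succ k
    have hk : (k : ℝ) + 1 ≠ 0 := by positivity
    have : (k+1 : ℝ) * q (k+1) = (k+1 : ℝ) * (4 * q k) := by
      rw [← h1, h3]; linarith
    have := mul_left_cancel₀ hk (by push_cast at this ⊢; linarith : ((k : ℝ)+1) * q (k+1) = ((k : ℝ)+1) * (4 * q k))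
    rw [this, ih]; ring

lemma conv_cb (k : ℕ) :
    ∑ a ∈ range (k+1), (Nat.centralBinom a : ℝ) * Nat.centralBinom (k - a) = 4 ^ k := q_eq k

lemma sum_cb_four (m : ℕ) :
    ∑ c ∈ range (m+1), (Nat.centralBinom c : ℝ) * 4 ^ (m - c)
      = (2 * m + 1) * Nat.centralBinom m := by
  induction m with
  | zero => simp
  | succ m ih =>
    rw [Finset.sum_range_succ]
    have h : ∀ c ∈ range (m+1),
        (Nat.centralBinom c : ℝ) * 4 ^ (m + 1 - c)
        = 4 * ((Nat.centralBinom c : ℝ) * 4 ^ (m - c)) := by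
      intro c hc
      have : m + 1 - c = (m - c) + 1 := by
        have : c ≤ m := by simpa [Nat.lt_succ_iff] using hc
        omega
      rw [this, pow_succ]
      ring
    rw [Finset.sum_congr rfl h, ← Finset.mul_sum, ih]
    have hcb := cb_succ m
    have h0 : m + 1 - (m + 1) = 0 := by omega
    rw [h0, pow_zero, mul_one]
    push_cast
    linarith

lemma sum_piAntidiag_cb (m : ℕ) :
    ∑ s ∈ piAntidiag (univ : Finset (Fin 3)) m, ∏ i, (Nat.centralBinom (s i) : ℝ)
      = (2 * m + 1) * Nat.centralBinom m := by
  classical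
  have key : ∑ s ∈ piAntidiag (univ : Finset (Fin 3)) m, ∏ i, (Nat.centralBinom (s i) : ℝ)
      = ∑ x ∈ (antidiagonal m).sigma (fun p => antidiagonal p.2),
          (Nat.centralBinom x.1.1 : ℝ) * (Nat.centralBinom x.2.1 * Nat.centralBinom x.2.2) := by
    refine Finset.sum_nbij' (fun s => ⟨(s 0, s 1 + s 2), (s 1, s 2)⟩)
      (fun x => ![x.1.1, x.2.1, x.2.2]) ?_ ?_ ?_ ?_ ?_
    · intro s hs
      rw [mem_piAntidiag] at hs
      have := hs.1
      rw [Fin.sum_univ_three] at this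
      simp [Finset.mem_sigma, Finset.mem_antidiagonal, ← this]
      omega
    · intro x hx
      rw [Finset.mem_sigma, Finset.HasAntidiagonal.mem_antidiagonal, Finset.HasAntidiagonal.mem_antidiagonal] at hx
      rw [mem_piAntidiag]
      constructor
      · rw [Fin.sum_univ_three]
        show x.1.1 + x.2.1 + x.2.2 = m
        omega
      · intro i _; exact mem_univ i
    · intro s hs
      funext i
      fin_cases i <;> rfl
    · intro x hx
      rw [Finset.mem_sigma, Finset.HasAntidiagonal.mem_antidiagonal, Finset.HasAntidiagonal.mem_antidiagonal] at hx
      obtain ⟨⟨p1, p2⟩, ⟨q1, q2⟩⟩ := x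
      simp only at hx ⊢
      congr 1
      simp only [Matrix.cons_val_zero, Matrix.cons_val_one, Matrix.head_cons]
      exact Prod.ext rfl (by simpa using hx.2)
    · intro s hs
      rw [Fin.prod_univ_three]
      ring
  rw [key, Finset.sum_sigma]
  have inner : ∀ p ∈ antidiagonal m,
      ∑ x ∈ antidiagonal p.2, (Nat.centralBinom p.1 : ℝ) *
        (Nat.centralBinom x.1 * Nat.centralBinom x.2)
      = (Nat.centralBinom p.1 : ℝ) * 4 ^ p.2 := by
    intro p _
    rw [← Finset.mul_sum]
    congr 1
    rw [Finset.Nat.sum_antidiagonal_eq_sum_range_succ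
      (fun i j => (Nat.centralBinom i : ℝ) * Nat.centralBinom j)]
    exact conv_cb p.2
  rw [Finset.sum_congr rfl inner,
    Finset.Nat.sum_antidiagonal_eq_sum_range_succ (fun i j => (Nat.centralBinom i : ℝ) * 4 ^ j)]
  exact sum_cb_four m



lemma cb_spec (k : ℕ) :
    (Nat.centralBinom k : ℝ) * ((Nat.factorial k : ℝ) * Nat.factorial k) = Nat.factorial (2 * k) := by
  have h := Nat.choose_mul_factorial_mul_factorial (show k ≤ 2 * k by omega)
  have h2 : 2 * k - k = k := by omega
  rw [h2] at h
  have h3 := congrArg (Nat.cast (R := ℝ)) h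
  push_cast at h3
  rw [Nat.centralBinom]
  push_cast
  linarith

lemma multinomial_sq (m : ℕ) (s : Fin 3 → ℕ) (hs : ∑ i, s i = m) :
    (Nat.multinomial univ s : ℝ) ^ 2 * Nat.centralBinom m
      = (Nat.multinomial univ (fun i => 2 * s i) : ℝ) * ∏ i, (Nat.centralBinom (s i) : ℝ) := by
  classical
  set A : ℝ := ∏ i, (Nat.factorial (s i) : ℝ) with hA_def
  set B : ℝ := ∏ i, (Nat.factorial (2 * s i) : ℝ) with hB_def
  have hA : A * Nat.multinomial univ s = Nat.factorial m := by
    have := Nat.multinomial_spec univ s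
    rw [hs] at this
    have := congrArg (Nat.cast (R := ℝ)) this
    push_cast at this
    simpa [hA_def] using this
  have hB : B * Nat.multinomial univ (fun i => 2 * s i) = Nat.factorial (2 * m) := by
    have hsum : ∑ i, 2 * s i = 2 * m := by rw [← Finset.mul_sum, hs]
    have := Nat.multinomial_spec univ (fun i => 2 * s i)
    rw [hsum] at this
    have := congrArg (Nat.cast (R := ℝ)) this
    push_cast at this
    simpa [hB_def] using this
  have hPA : (∏ i, (Nat.centralBinom (s i) : ℝ)) * A ^ 2 = B := by
    rw [hA_def, hB_def, ← Finset.prod_pow, ← Finset.prod_mul_distrib]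
    refine Finset.prod_congr rfl fun i _ => ?_
    have := cb_spec (s i)
    nlinarith [this]
  have hApos : 0 < A := Finset.prod_pos fun i _ => by positivity
  have hBpos : 0 < B := Finset.prod_pos fun i _ => by positivity
  have hne : A ^ 2 * B ≠ 0 := by positivity
  apply mul_right_cancel₀ hne
  calc (Nat.multinomial univ s : ℝ) ^ 2 * Nat.centralBinom m * (A ^ 2 * B)
      = ((A * Nat.multinomial univ s) * (A * Nat.multinomial univ s))
        * (Nat.centralBinom m) * B := by ring
    _ = ((Nat.factorial m : ℝ) * (Nat.factorial m)) * Nat.centralBinom m * B := by rw [hA]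
    _ = (Nat.factorial (2 * m) : ℝ) * B := by rw [← cb_spec m]; ring
    _ = (B * Nat.multinomial univ (fun i => 2 * s i)) *
        ((∏ i, (Nat.centralBinom (s i) : ℝ)) * A ^ 2) := by rw [hB, hPA]
    _ = (Nat.multinomial univ (fun i => 2 * s i) : ℝ)
        * (∏ i, (Nat.centralBinom (s i) : ℝ)) * (A ^ 2 * B) := by ring



lemma prod_X_pow_univ (r : Fin 3 → ℕ) :
    (∏ i, (MvPolynomial.X i : MvPolynomial (Fin 3) ℝ) ^ r i)
      = MvPolynomial.monomial (Finsupp.equivFunOnFinite.symm r) 1 := by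
  classical
  rw [← MvPolynomial.prod_X_pow_eq_monomial]
  refine (Finset.prod_subset (Finset.subset_univ _) fun x _ hx => ?_).symm
  have h0 : (Finsupp.equivFunOnFinite.symm r) x = 0 := by
    simpa [Finsupp.mem_support_iff] using hx
  rw [show r x = 0 from h0, pow_zero]

lemma symm_inj {r r' : Fin 3 → ℕ}
    (h : (Finsupp.equivFunOnFinite.symm r : Fin 3 →₀ ℕ) = Finsupp.equivFunOnFinite.symm r') :
    r = r' := Finsupp.equivFunOnFinite.symm.injective h

lemma coeff_extract (m : ℕ) (Mo : (Fin 3 → ℕ) → ℝ) (c : ℝ)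
    (h : ∀ v : Fin 3 → ℝ,
      ∑ r ∈ piAntidiag (univ : Finset (Fin 3)) (2 * m),
        (Nat.multinomial univ r : ℝ) * Mo r * ∏ i, v i ^ r i
      = c * (∑ i, v i ^ 2) ^ m) :
    ∀ s ∈ piAntidiag (univ : Finset (Fin 3)) m,
      (Nat.multinomial univ (fun i => 2 * s i) : ℝ) * Mo (fun i => 2 * s i)
        = c * Nat.multinomial univ s := by
  classical
  intro s hs
  set p : MvPolynomial (Fin 3) ℝ :=
    ∑ r ∈ piAntidiag (univ : Finset (Fin 3)) (2 * m),
      MvPolynomial.C ((Nat.multinomial univ r : ℝ) * Mo r) * ∏ i, MvPolynomial.X i ^ r i with hp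
  set q : MvPolynomial (Fin 3) ℝ :=
    MvPolynomial.C c * (∑ i, MvPolynomial.X i ^ 2) ^ m with hq
  have hpq : p = q := by
    apply MvPolynomial.funext
    intro v
    rw [hp, hq]
    simp only [map_sum, MvPolynomial.eval_mul, MvPolynomial.eval_C, MvPolynomial.eval_prod,
      MvPolynomial.eval_pow, MvPolynomial.eval_X, map_pow]
    exact h v
  have hs2 : (fun i => 2 * s i) ∈ piAntidiag (univ : Finset (Fin 3)) (2 * m) := by
    rw [mem_piAntidiag] at hs ⊢
    exact ⟨by rw [← Finset.mul_sum, hs.1], fun i _ => mem_univ i⟩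
  set d : Fin 3 →₀ ℕ := Finsupp.equivFunOnFinite.symm (fun i => 2 * s i) with hd
  have hcp : MvPolynomial.coeff d p
      = (Nat.multinomial univ (fun i => 2 * s i) : ℝ) * Mo (fun i => 2 * s i) := by
    rw [hp, MvPolynomial.coeff_sum]
    have : ∀ r ∈ piAntidiag (univ : Finset (Fin 3)) (2 * m),
        MvPolynomial.coeff d (MvPolynomial.C ((Nat.multinomial univ r : ℝ) * Mo r)
          * ∏ i, MvPolynomial.X i ^ r i)
        = if r = (fun i => 2 * s i) then (Nat.multinomial univ r : ℝ) * Mo r else 0 := by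
      intro r _
      rw [prod_X_pow_univ, MvPolynomial.coeff_C_mul, MvPolynomial.coeff_monomial]
      by_cases hr : r = fun i => 2 * s i
      · simp [hr, hd]
      · have : ¬ ((Finsupp.equivFunOnFinite.symm r : Fin 3 →₀ ℕ) = d) := by
          rw [hd]; exact fun hc => hr (symm_inj hc)
        simp [this, hr]
    rw [Finset.sum_congr rfl this, Finset.sum_ite_eq' _ (fun i => 2 * s i)
      (fun r => (Nat.multinomial univ r : ℝ) * Mo r), if_pos hs2]
  have hcq : MvPolynomial.coeff d q = c * Nat.multinomial univ s := by
    rw [hq, MvPolynomial.coeff_C_mul]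
    congr 1
    rw [Finset.sum_pow_eq_sum_piAntidiag, MvPolynomial.coeff_sum]
    have : ∀ t ∈ piAntidiag (univ : Finset (Fin 3)) m,
        MvPolynomial.coeff d ((Nat.multinomial univ t : MvPolynomial (Fin 3) ℝ)
          * ∏ i, (MvPolynomial.X i ^ 2) ^ t i)
        = if t = s then (Nat.multinomial univ t : ℝ) else 0 := by
      intro t _
      have hXp : (∏ i, ((MvPolynomial.X i : MvPolynomial (Fin 3) ℝ) ^ 2) ^ t i)
          = ∏ i, MvPolynomial.X i ^ (2 * t i) := by
        refine Finset.prod_congr rfl fun i _ => ?_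
        rw [← pow_mul]
      have hC : (Nat.multinomial univ t : MvPolynomial (Fin 3) ℝ)
          = MvPolynomial.C ((Nat.multinomial univ t : ℝ)) :=
        (map_natCast (MvPolynomial.C : ℝ →+* MvPolynomial (Fin 3) ℝ) _).symm
      rw [hXp, hC, prod_X_pow_univ, MvPolynomial.coeff_C_mul, MvPolynomial.coeff_monomial]
      by_cases ht : t = s
      · simp [ht, hd]
      · have : ¬ ((Finsupp.equivFunOnFinite.symm (fun i => 2 * t i) : Fin 3 →₀ ℕ) = d) := by
          rw [hd]
          intro hc
          exact ht (funext fun i => by have := congrFun (symm_inj hc) i; omega)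
        simp [this, ht]
    rw [Finset.sum_congr rfl this, Finset.sum_ite_eq' _ s
      (fun t => (Nat.multinomial univ t : ℝ)), if_pos hs]
  rw [← hcp, ← hcq, hpq]



open MeasureTheory

variable {M : Type*} [MeasurableSpace M] {μ : Measure M} {J : Fin 3 → M → ℝ}

lemma dir_expand (μ : Measure M) (J : Fin 3 → M → ℝ)
    (hint : ∀ (m : ℕ) (r : Fin 3 → ℕ), (∑ i, r i) = 2 * m →
      Integrable (fun x => ∏ i, (J i x) ^ (r i)) μ) (m : ℕ) (v : Fin 3 → ℝ) :
    ∫ x, (∑ i, v i * J i x) ^ (2 * m) ∂μ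
      = ∑ r ∈ piAntidiag (univ : Finset (Fin 3)) (2 * m),
          (Nat.multinomial univ r : ℝ) * (∫ x, ∏ i, J i x ^ r i ∂μ) * ∏ i, v i ^ r i := by
  have hpt : ∀ x : M, (∑ i, v i * J i x) ^ (2 * m)
      = ∑ r ∈ piAntidiag (univ : Finset (Fin 3)) (2 * m),
          ((Nat.multinomial univ r : ℝ) * ∏ i, v i ^ r i) * ∏ i, J i x ^ r i := by
    intro x
    rw [Finset.sum_pow_eq_sum_piAntidiag]
    refine Finset.sum_congr rfl fun r _ => ?_
    simp only [mul_pow, Finset.prod_mul_distrib]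
    ring
  rw [integral_congr_ae (Filter.Eventually.of_forall hpt)]
  rw [integral_finset_sum _ (fun r hr => ?_)]
  · refine Finset.sum_congr rfl fun r _ => ?_
    rw [MeasureTheory.integral_const_mul]
    ring
  · rw [mem_piAntidiag] at hr
    exact (hint m r hr.1).const_mul _

lemma unit_e2 : (∑ i, ((fun i : Fin 3 => if i = 2 then (1:ℝ) else 0) i) ^ 2) = 1 := by
  rw [Fin.sum_univ_three]
  simp

lemma dir_value (μ : Measure M) (J : Fin 3 → M → ℝ) (C : ℕ → ℝ)
    (hC : ∀ (m : ℕ) (v : Fin 3 → ℝ), (∑ i, (v i) ^ 2) = 1 →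
      ∫ x, (∑ i, v i * J i x) ^ (2 * m) ∂μ = C m) (m : ℕ) (v : Fin 3 → ℝ) :
    ∫ x, (∑ i, v i * J i x) ^ (2 * m) ∂μ = C m * (∑ i, (v i) ^ 2) ^ m := by
  by_cases hv : (∑ i, (v i) ^ 2) = 0
  · have hvi : ∀ i, v i = 0 := by
      intro i
      have h := (Finset.sum_eq_zero_iff_of_nonneg
        (fun j _ => sq_nonneg (v j))).1 hv i (Finset.mem_univ i)
      exact pow_eq_zero_iff (by norm_num) |>.1 h
    have hz : ∀ x : M, (∑ i, v i * J i x) = 0 := by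
      intro x
      refine Finset.sum_eq_zero fun i _ => by rw [hvi i, zero_mul]
    cases m with
    | zero =>
      have h1 : ∫ x, (∑ i, v i * J i x) ^ (2 * 0) ∂μ = ∫ x, (1:ℝ) ∂μ := by
        refine integral_congr_ae (Filter.Eventually.of_forall fun x => ?_)
        norm_num
      have h2 : ∫ x, (∑ i, (fun i : Fin 3 => if i = 2 then (1:ℝ) else 0) i * J i x) ^ (2 * 0) ∂μ
          = ∫ x, (1:ℝ) ∂μ := by
        refine integral_congr_ae (Filter.Eventually.of_forall fun x => ?_)
        norm_num
      rw [h1, ← h2, hC 0 _ unit_e2, hv]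
      norm_num
    | succ k =>
      have h1 : ∫ x, (∑ i, v i * J i x) ^ (2 * (k+1)) ∂μ = 0 := by
        rw [integral_congr_ae (Filter.Eventually.of_forall fun x => ?_), integral_zero]
        rw [hz x, zero_pow (by omega)]
      rw [h1, hv, zero_pow (by omega), mul_zero]
  · have hpos : 0 < ∑ i, (v i) ^ 2 :=
      lt_of_le_of_ne (Finset.sum_nonneg fun j _ => sq_nonneg (v j)) (Ne.symm hv)
    set t : ℝ := Real.sqrt (∑ i, (v i) ^ 2) with htdef
    have htpos : 0 < t := Real.sqrt_pos.2 hpos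
    have ht2 : t ^ 2 = ∑ i, (v i) ^ 2 := Real.sq_sqrt hpos.le
    set u : Fin 3 → ℝ := fun i => v i / t with hudef
    have hu : (∑ i, (u i) ^ 2) = 1 := by
      rw [hudef]
      simp only [div_pow]
      rw [← Finset.sum_div, ← ht2]
      field_simp
    have hpt : ∀ x : M, (∑ i, v i * J i x) ^ (2 * m)
        = t ^ (2 * m) * (∑ i, u i * J i x) ^ (2 * m) := by
      intro x
      rw [← mul_pow, Finset.mul_sum]
      congr 1
      refine Finset.sum_congr rfl fun i _ => ?_
      rw [hudef]
      field_simp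
    rw [integral_congr_ae (Filter.Eventually.of_forall hpt), MeasureTheory.integral_const_mul,
      hC m u hu, ← ht2, ← pow_mul, mul_comm (t ^ (2*m)), mul_comm 2 m, pow_mul]

lemma Sm_integrable (μ : Measure M) (J : Fin 3 → M → ℝ)
    (hint : ∀ (m : ℕ) (r : Fin 3 → ℕ), (∑ i, r i) = 2 * m →
      Integrable (fun x => ∏ i, (J i x) ^ (r i)) μ) (m : ℕ) :
    Integrable (fun x => (∑ i, (J i x) ^ 2) ^ m) μ := by
  have hpt : ∀ x : M, (∑ i, (J i x) ^ 2) ^ m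
      = ∑ s ∈ piAntidiag (univ : Finset (Fin 3)) m,
          (Nat.multinomial univ s : ℝ) * ∏ i, J i x ^ (2 * s i) := by
    intro x
    rw [Finset.sum_pow_eq_sum_piAntidiag]
    refine Finset.sum_congr rfl fun s _ => ?_
    congr 1
    exact Finset.prod_congr rfl fun i _ => by rw [← pow_mul]
  rw [show (fun x => (∑ i, (J i x) ^ 2) ^ m) = fun x =>
      ∑ s ∈ piAntidiag (univ : Finset (Fin 3)) m,
        (Nat.multinomial univ s : ℝ) * ∏ i, J i x ^ (2 * s i) from funext hpt]
  refine integrable_finset_sum _ fun s hs => ?_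
  rw [mem_piAntidiag] at hs
  have hsum : ∑ i, 2 * s i = 2 * m := by rw [← Finset.mul_sum, hs.1]
  exact (hint m _ hsum).const_mul _

lemma Sm_expand (μ : Measure M) (J : Fin 3 → M → ℝ)
    (hint : ∀ (m : ℕ) (r : Fin 3 → ℕ), (∑ i, r i) = 2 * m →
      Integrable (fun x => ∏ i, (J i x) ^ (r i)) μ) (m : ℕ) :
    ∫ x, (∑ i, (J i x) ^ 2) ^ m ∂μ
      = ∑ s ∈ piAntidiag (univ : Finset (Fin 3)) m,
          (Nat.multinomial univ s : ℝ) * ∫ x, ∏ i, J i x ^ (2 * s i) ∂μ := by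
  have hpt : ∀ x : M, (∑ i, (J i x) ^ 2) ^ m
      = ∑ s ∈ piAntidiag (univ : Finset (Fin 3)) m,
          (Nat.multinomial univ s : ℝ) * ∏ i, J i x ^ (2 * s i) := by
    intro x
    rw [Finset.sum_pow_eq_sum_piAntidiag]
    refine Finset.sum_congr rfl fun s _ => ?_
    congr 1
    exact Finset.prod_congr rfl fun i _ => by rw [← pow_mul]
  rw [integral_congr_ae (Filter.Eventually.of_forall hpt)]
  rw [integral_finset_sum _ (fun s hs => ?_)]
  · exact Finset.sum_congr rfl fun s _ => by rw [MeasureTheory.integral_const_mul]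
  · rw [mem_piAntidiag] at hs
    have hsum : ∑ i, 2 * s i = 2 * m := by rw [← Finset.mul_sum, hs.1]
    exact (hint m _ hsum).const_mul _


lemma moment (μ : Measure M) (J : Fin 3 → M → ℝ) (C : ℕ → ℝ)
    (hint : ∀ (m : ℕ) (r : Fin 3 → ℕ), (∑ i, r i) = 2 * m →
      Integrable (fun x => ∏ i, (J i x) ^ (r i)) μ)
    (hC : ∀ (m : ℕ) (v : Fin 3 → ℝ), (∑ i, (v i) ^ 2) = 1 →
      ∫ x, (∑ i, v i * J i x) ^ (2 * m) ∂μ = C m) (m : ℕ) :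
    ∫ x, (∑ i, (J i x) ^ 2) ^ m ∂μ
      = (2 * (m : ℝ) + 1) * ∫ x, (J 2 x) ^ (2 * m) ∂μ := by
  have hCm : C m = ∫ x, (J 2 x) ^ (2 * m) ∂μ := by
    rw [← hC m _ unit_e2]
    refine integral_congr_ae (Filter.Eventually.of_forall fun x => ?_)
    simp [Fin.sum_univ_three]
  have hdir : ∀ v : Fin 3 → ℝ,
      ∑ r ∈ piAntidiag (univ : Finset (Fin 3)) (2 * m),
        (Nat.multinomial univ r : ℝ) * (∫ x, ∏ i, J i x ^ r i ∂μ) * ∏ i, v i ^ r i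
      = C m * (∑ i, (v i) ^ 2) ^ m := by
    intro v
    rw [← dir_expand μ J hint m v, dir_value μ J C hC m v]
  have key := coeff_extract m (fun r => ∫ x, ∏ i, J i x ^ r i ∂μ) (C m) hdir
  have hcbm : (Nat.centralBinom m : ℝ) ≠ 0 := Nat.cast_ne_zero.2 (Nat.centralBinom_ne_zero m)
  have hterm : ∀ s ∈ piAntidiag (univ : Finset (Fin 3)) m,
      (Nat.centralBinom m : ℝ) *
        ((Nat.multinomial univ s : ℝ) * ∫ x, ∏ i, J i x ^ (2 * s i) ∂μ)
      = C m * ∏ i, (Nat.centralBinom (s i) : ℝ) := by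
    intro s hs
    have hs' : ∑ i, s i = m := by
      rw [mem_piAntidiag] at hs; exact hs.1
    have h2 := key s hs
    have hsq := multinomial_sq m s hs'
    have hmul2 : (Nat.multinomial univ (fun i => 2 * s i) : ℝ) ≠ 0 :=
      Nat.cast_ne_zero.2 (Nat.multinomial_pos _ _).ne'
    apply mul_right_cancel₀ hmul2
    simp only at h2
    linear_combination ((Nat.centralBinom m : ℝ) * (Nat.multinomial univ s : ℝ)) * h2
      + C m * hsq
  have h5 : (Nat.centralBinom m : ℝ) * ∫ x, (∑ i, (J i x) ^ 2) ^ m ∂μ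
      = (Nat.centralBinom m : ℝ) * ((2 * (m : ℝ) + 1) * C m) := by
    rw [Sm_expand μ J hint m, Finset.mul_sum, Finset.sum_congr rfl hterm,
      ← Finset.mul_sum, sum_piAntidiag_cb m]
    ring
  have := mul_left_cancel₀ hcbm h5
  rw [this, hCm]

end PFE

open MeasureTheory

theorem partition_function_expansion
    {M : Type*} [MeasurableSpace M] (μ : Measure M)
    (J : Fin 3 → M → ℝ) (C : ℕ → ℝ) (a : ℝ) (ha : a < 0)
    (hint : ∀ (m : ℕ) (r : Fin 3 → ℕ), (∑ i, r i) = 2 * m →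
      Integrable (fun x => ∏ i, (J i x) ^ (r i)) μ)
    (hC : ∀ (m : ℕ) (v : Fin 3 → ℝ), (∑ i, (v i) ^ 2) = 1 →
      ∫ x, (∑ i, v i * J i x) ^ (2 * m) ∂μ = C m)
    (hexp : Integrable (fun x => Real.exp (a * (∑ i, (J i x) ^ 2))) μ)
    (hconv : Summable (fun m : ℕ =>
      |a ^ m / (Nat.factorial m) * (2 * m + 1) *
        ∫ x, (J 2 x) ^ (2 * m) ∂μ|)) :
    ∫ x, Real.exp (a * (∑ i, (J i x) ^ 2)) ∂μ =
      ∑' m : ℕ, a ^ m / (Nat.factorial m) * (2 * m + 1) *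
        ∫ x, (J 2 x) ^ (2 * m) ∂μ := by
  classical
  set g : ℕ → M → ℝ := fun m x => a ^ m / (Nat.factorial m) * (∑ i, (J i x) ^ 2) ^ m with hg
  have hg_int : ∀ m : ℕ, Integrable (g m) μ := fun m =>
    (PFE.Sm_integrable μ J hint m).const_mul _
  have hmom := PFE.moment μ J C hint hC
  have hJ2 : ∀ m : ℕ, 0 ≤ ∫ x, (J 2 x) ^ (2 * m) ∂μ := fun m =>
    integral_nonneg fun x => by rw [pow_mul]; positivity
  have hS : ∀ x : M, 0 ≤ ∑ i, (J i x) ^ 2 := fun x =>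
    Finset.sum_nonneg fun i _ => sq_nonneg _
  have hc : ∀ m : ℕ, ∫ x, ‖g m x‖ ∂μ
      = |a ^ m / (Nat.factorial m) * (2 * m + 1) * ∫ x, (J 2 x) ^ (2 * m) ∂μ| := by
    intro m
    have h1 : ∀ x : M, ‖g m x‖ = |a ^ m / (Nat.factorial m)| * (∑ i, (J i x) ^ 2) ^ m := by
      intro x
      rw [hg]
      simp only [Real.norm_eq_abs, abs_mul]
      rw [abs_of_nonneg (pow_nonneg (hS x) m)]
    rw [integral_congr_ae (Filter.Eventually.of_forall h1), MeasureTheory.integral_const_mul,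
      hmom m]
    rw [abs_mul, abs_mul]
    rw [abs_of_nonneg (hJ2 m), abs_of_nonneg (by positivity : (0:ℝ) ≤ 2 * (m:ℝ) + 1)]
    ring
  have hlint : ∀ m : ℕ, ∫⁻ x, ‖g m x‖₊ ∂μ
      = ENNReal.ofReal (|a ^ m / (Nat.factorial m) * (2 * m + 1) *
          ∫ x, (J 2 x) ^ (2 * m) ∂μ|) := by
    intro m
    rw [← hc m]; exact (MeasureTheory.ofReal_integral_norm_eq_lintegral_enorm (hg_int m)).symm
  have hne : (∑' m : ℕ, ∫⁻ x, ‖g m x‖₊ ∂μ) ≠ ⊤ := by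
    rw [tsum_congr hlint, ← ENNReal.ofReal_tsum_of_nonneg (fun m => abs_nonneg _) hconv]
    exact ENNReal.ofReal_ne_top
  have hswap := MeasureTheory.integral_tsum (fun m => (hg_int m).aestronglyMeasurable) hne
  have hpt : ∀ x : M, Real.exp (a * (∑ i, (J i x) ^ 2)) = ∑' m : ℕ, g m x := by
    intro x
    rw [Real.exp_eq_exp_ℝ, NormedSpace.exp_eq_tsum_div]
    refine tsum_congr fun m => ?_
    rw [hg]
    simp only [mul_pow]
    ring
  rw [integral_congr_ae (Filter.Eventually.of_forall hpt), hswap]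
  refine tsum_congr fun m => ?_
  rw [hg]
  simp only
  rw [MeasureTheory.integral_const_mul, hmom m]
  push_cast
  ring
end
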